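/- Let h(t,x) = exp(-x²/(4t)) for t > 0. Then (∂ₜh)³/h² = ∂ₜₜₜh + (6/t)·∂ₜₜh + (6/t²)·∂ₜh. -/

import Mathlib

noncomputable def h (t x : ℝ) : ℝ := Real.exp (-x^2/(4*t))

/-! For `f t = exp (-a/t)` each derivative is `f` times a polynomial in `1/t`:
`f' = (a/t²) f`, `f'' = (-2a/t³ + a²/t⁴) f`, `f''' = (6a/t⁴ - 6a²/t⁵ + a³/t⁶) f`.
In `f''' + (6/t) f'' + (6/t²) f'` everything but `(a³/t⁶) f = f'³/f²` cancels.
The heat kernel is the case `a = x²/4`. -/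

open Real

section

variable {a s : ℝ}

theorem hasDerivAt_const_div_pow (c : ℝ) (n : ℕ) (hs : s ≠ 0) :
    HasDerivAt (fun s => c / s ^ n) (-(n * c) / s ^ (n + 1)) s := by
  refine ((hasDerivAt_const s c).fun_div (hasDerivAt_pow n s) (pow_ne_zero n hs)).congr_deriv ?_
  rcases n with _ | n
  · simp
  · rw [Nat.add_sub_cancel]
    field_simp
    ring

theorem hasDerivAt_exp_neg_div (hs : s ≠ 0) :
    HasDerivAt (fun s => exp (-a / s)) (a / s ^ 2 * exp (-a / s)) s := by
  have hdiv : HasDerivAt (fun s => -a / s ^ 1) (a / s ^ 2) s := by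
    simpa using hasDerivAt_const_div_pow (-a) 1 hs
  simpa [mul_comm] using hdiv.exp

theorem hasDerivAt_mul_exp_neg_div {p : ℝ → ℝ} {p' : ℝ} (hp : HasDerivAt p p' s) (hs : s ≠ 0) :
    HasDerivAt (fun s => p s * exp (-a / s)) ((p' + p s * (a / s ^ 2)) * exp (-a / s)) s :=
  (hp.fun_mul (hasDerivAt_exp_neg_div hs)).congr_deriv (by ring)

theorem deriv_eq_deriv_of_forall_ne_zero {f g : ℝ → ℝ} (hfg : ∀ s ≠ 0, deriv f s = g s)
    (hs : s ≠ 0) : deriv (deriv f) s = deriv g s :=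
  Filter.EventuallyEq.deriv_eq ((eventually_ne_nhds hs).mono hfg)

theorem deriv_exp_neg_div (hs : s ≠ 0) :
    deriv (fun s => exp (-a / s)) s = a / s ^ 2 * exp (-a / s) :=
  (hasDerivAt_exp_neg_div hs).deriv

theorem deriv_deriv_exp_neg_div (hs : s ≠ 0) :
    deriv (deriv fun s => exp (-a / s)) s
      = (-(2 * a) / s ^ 3 + a ^ 2 / s ^ 4) * exp (-a / s) := by
  rw [deriv_eq_deriv_of_forall_ne_zero (fun _ => deriv_exp_neg_div) hs]
  refine (hasDerivAt_mul_exp_neg_div (hasDerivAt_const_div_pow a 2 hs) hs).deriv.trans ?_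
  field_simp
  ring

theorem deriv_deriv_deriv_exp_neg_div (hs : s ≠ 0) :
    deriv (deriv (deriv fun s => exp (-a / s))) s
      = (6 * a / s ^ 4 - 6 * a ^ 2 / s ^ 5 + a ^ 3 / s ^ 6) * exp (-a / s) := by
  rw [deriv_eq_deriv_of_forall_ne_zero (fun _ => deriv_deriv_exp_neg_div) hs]
  have hp : HasDerivAt (fun s => -(2 * a) / s ^ 3 + a ^ 2 / s ^ 4)
      (6 * a / s ^ 4 - 4 * a ^ 2 / s ^ 5) s :=
    ((hasDerivAt_const_div_pow (-(2 * a)) 3 hs).fun_add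
      (hasDerivAt_const_div_pow (a ^ 2) 4 hs)).congr_deriv (by push_cast; ring)
  refine (hasDerivAt_mul_exp_neg_div hp hs).deriv.trans ?_
  field_simp
  ring

theorem deriv_exp_neg_div_cube_div_sq (hs : s ≠ 0) :
    (deriv (fun s => exp (-a / s)) s) ^ 3 / (exp (-a / s)) ^ 2 =
      deriv (deriv (deriv fun s => exp (-a / s))) s
        + (6 / s) * deriv (deriv fun s => exp (-a / s)) s
        + (6 / s ^ 2) * deriv (fun s => exp (-a / s)) s := by
  rw [deriv_exp_neg_div hs, deriv_deriv_exp_neg_div hs, deriv_deriv_deriv_exp_neg_div hs]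
  field_simp
  ring

end

theorem stmt_5 (t x : ℝ) (ht : 0 < t) :
    (deriv (fun s => h s x) t)^3 / (h t x)^2 =
      deriv (deriv (deriv (fun s => h s x))) t
        + (6/t) * deriv (deriv (fun s => h s x)) t
        + (6/t^2) * deriv (fun s => h s x) t := by
  have hh : ∀ s, h s x = exp (-(x ^ 2 / 4) / s) := fun s => by
    rw [h, neg_div, neg_div, div_div]
  simp only [hh]
  exact deriv_exp_neg_div_cube_div_sq ht.ne'
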